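/- (Explicit Rayleigh's Cutting Law) Let G be a finite connected weighted graph, and let e_i be an edge of G with endpoints p_i, q_i and length L_i that is not a bridge. Then for all vertices s, t of G: r_G(s,t) = r_{G−e_i}(s,t) − (1/(L_i + R_i))·( j_{p_i}^{G−e_i}(q_i,s) − j_{p_i}^{G−e_i}(q_i,t) )² = r_{G−e_i}(s,t) − ((L_i + R_i)/L_i²)·( j_{p_i}(q_i,s) − j_{p_i}(q_i,t) )². In particular r_{G−e_i}(s,t) ≥ r_G(s,t), with equality if and only if j_{p_i}(q_i,s) = j_{p_i}(q_i,t). -/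

import Mathlib

open scoped Classical

/-- A finite weighted multigraph (resistive electrical network): finitely many
vertices and edges; each edge `e` has two endpoints `ends e` and a positive
length (resistance) `len e`.  Multiple edges and self-loops are allowed. -/
structure WMG where
  V : Type
  E : Type
  instV : Fintype V
  instE : Fintype E
  ends : E → V × V
  len : E → ℝ
  len_pos : ∀ e, 0 < len e

attribute [instance] WMG.instV WMG.instE

/-- The Moore–Penrose pseudoinverse of a real square matrix, characterized by
the four Penrose equations (it exists and is unique for real matrices). -/
noncomputable def Matrix.mpinv {n : Type} [Fintype n] (A : Matrix n n ℝ) : Matrix n n ℝ :=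
  if h : ∃ B : Matrix n n ℝ,
      A * B * A = A ∧ B * A * B = B ∧ Matrix.transpose (A * B) = A * B ∧ Matrix.transpose (B * A) = B * A
  then h.choose else 0

namespace WMG

/-- Indicator function. -/
noncomputable def ind {α : Type} (x y : α) : ℝ := if x = y then 1 else 0

/-- The weighted Laplacian: an edge `e` with endpoints `a, b` contributes
`(1/len e) * (δ_{ua} - δ_{ub}) * (δ_{va} - δ_{vb})` to the `(u,v)` entry.  So
the off-diagonal `(u,v)` entry is `-∑ 1/len e` over the edges joining `u` and
`v`, and all row sums are zero. -/
noncomputable def lap (G : WMG) : Matrix G.V G.V ℝ :=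
  ∑ e : G.E, (G.len e)⁻¹ •
    Matrix.of (fun u v : G.V =>
      (ind u (G.ends e).1 - ind u (G.ends e).2) *
      (ind v (G.ends e).1 - ind v (G.ends e).2))

/-- Effective resistance `r(p,q) = L⁺pp - 2·L⁺pq + L⁺qq`. -/
noncomputable def res (G : WMG) (p q : G.V) : ℝ :=
  G.lap.mpinv p p - 2 * G.lap.mpinv p q + G.lap.mpinv q q

/-- Voltage function `j_p(q,s) = L⁺pp - L⁺pq - L⁺ps + L⁺qs`. -/
noncomputable def volt (G : WMG) (p q s : G.V) : ℝ :=
  G.lap.mpinv p p - G.lap.mpinv p q - G.lap.mpinv p s + G.lap.mpinv q s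

/-- Two vertices are adjacent if some edge has them as its endpoints. -/
def Adj (G : WMG) (u v : G.V) : Prop :=
  ∃ e : G.E, G.ends e = (u, v) ∨ G.ends e = (v, u)

/-- `u` and `v` are joined by a walk in `G`. -/
def Reach (G : WMG) (u v : G.V) : Prop := Relation.ReflTransGen G.Adj u v

/-- `G` is connected. -/
def Connected (G : WMG) : Prop := Nonempty G.V ∧ ∀ u v : G.V, G.Reach u v

/-- Quotient graph: identify vertices along (the equivalence generated by) the
relation `r`; all edges are kept. -/
noncomputable def quot (G : WMG) (r : G.V → G.V → Prop) : WMG where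
  V := Quot r
  E := G.E
  instV := Fintype.ofFinite _
  instE := G.instE
  ends e := (Quot.mk r (G.ends e).1, Quot.mk r (G.ends e).2)
  len := G.len
  len_pos := G.len_pos

/-- The canonical map from the vertices of `G` to those of a quotient of `G`. -/
def quotMap (G : WMG) (r : G.V → G.V → Prop) : G.V → (G.quot r).V := Quot.mk r

/-- `G_{pq}`: identify the vertices `p` and `q`. -/
noncomputable def ident2 (G : WMG) (p q : G.V) : WMG :=
  G.quot (fun x y => x = p ∧ y = q)

def ident2Map (G : WMG) (p q : G.V) : G.V → (G.ident2 p q).V :=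
  G.quotMap _

/-- `G_{pqs}`: identify the vertices `p`, `q`, `s` into a single vertex. -/
noncomputable def ident3 (G : WMG) (p q s : G.V) : WMG :=
  G.quot (fun x y => (x = p ∧ y = q) ∨ (x = p ∧ y = s))

/-- `G_{pq,st}`: identify `p` with `q` and, separately, `s` with `t`. -/
noncomputable def ident22 (G : WMG) (p q s t : G.V) : WMG :=
  G.quot (fun x y => (x = p ∧ y = q) ∨ (x = s ∧ y = t))

/-- `G_S`: identify all vertices in the set `S` into a single vertex. -/
noncomputable def identSet (G : WMG) (S : Set G.V) : WMG :=
  G.quot (fun x y => x ∈ S ∧ y ∈ S)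

/-- `G − e`: delete the edge `e` (keeping all vertices). -/
noncomputable def delete (G : WMG) (e : G.E) : WMG where
  V := G.V
  E := {f : G.E // f ≠ e}
  instV := G.instV
  instE := Fintype.ofFinite _
  ends f := G.ends f.1
  len f := G.len f.1
  len_pos f := G.len_pos f.1

/-- `e` is a bridge if `G − e` is disconnected. -/
def IsBridge (G : WMG) (e : G.E) : Prop := ¬ (G.delete e).Connected

/-- `Ḡ_e`: contract the edge `e` (identify its endpoints and delete it). -/
noncomputable def contract (G : WMG) (e : G.E) : WMG :=
  (G.delete e).quot (fun x y => x = (G.ends e).1 ∧ y = (G.ends e).2)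

def contractMap (G : WMG) (e : G.E) : G.V → (G.contract e).V := Quot.mk _

/-- Replace the length of the edge `e` by `L'`. -/
noncomputable def setLen (G : WMG) (e : G.E) (L' : ℝ) (hL' : 0 < L') : WMG where
  V := G.V
  E := G.E
  instV := G.instV
  instE := G.instE
  ends := G.ends
  len f := if f = e then L' else G.len f
  len_pos f := by
    by_cases hf : f = e
    · simpa [hf] using hL'
    · simpa [hf] using G.len_pos f

/-- `T` is (the edge set of) a spanning tree of `G`: using only edges of `T`
any two vertices are joined, and `T` has (number of vertices) − 1 edges. -/
def IsSpanningTree (G : WMG) (T : Finset G.E) : Prop :=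
  (∀ u v : G.V, Relation.ReflTransGen
      (fun x y => ∃ e ∈ T, G.ends e = (x, y) ∨ G.ends e = (y, x)) u v) ∧
  T.card = Fintype.card G.V - 1

/-- `t G`: the number of spanning trees of `G` (equals `1` for a one-vertex
graph; self-loops contribute nothing). -/
noncomputable def t (G : WMG) : ℕ := Nat.card {T : Finset G.E // G.IsSpanningTree T}

/-- `t(G_{pq})`, with the convention `t(G_{pp}) = 0`. -/
noncomputable def t2 (G : WMG) (p q : G.V) : ℕ :=
  if p = q then 0 else (G.ident2 p q).t

/-- Disjoint union of two graphs. -/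
noncomputable def disjUnion (G₁ G₂ : WMG) : WMG where
  V := G₁.V ⊕ G₂.V
  E := G₁.E ⊕ G₂.E
  instV := inferInstance
  instE := inferInstance
  ends := Sum.elim (fun e => (Sum.inl (G₁.ends e).1, Sum.inl (G₁.ends e).2))
                   (fun e => (Sum.inr (G₂.ends e).1, Sum.inr (G₂.ends e).2))
  len := Sum.elim G₁.len G₂.len
  len_pos := by
    rintro (e | e)
    · exact G₁.len_pos e
    · exact G₂.len_pos e

/-- Glue `G₁` and `G₂` along two pairs of vertices (`p₁ ↔ p₂`, `q₁ ↔ q₂`):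
the result is the graph `G = G₁ ∪ G₂` with `G₁ ∩ G₂ = {p, q}` (the two pieces
share exactly these two vertices and no edges). -/
noncomputable def glue2 (G₁ G₂ : WMG) (p₁ q₁ : G₁.V) (p₂ q₂ : G₂.V) : WMG :=
  (G₁.disjUnion G₂).quot (fun x y =>
    (x = Sum.inl p₁ ∧ y = Sum.inr p₂) ∨ (x = Sum.inl q₁ ∧ y = Sum.inr q₂))

/-- Glue `G₁` and `G₂` along three pairs of vertices: the result is the graph
`G = G₁ ∪ G₂` with `G₁ ∩ G₂ = {p, q, s}`. -/
noncomputable def glue3 (G₁ G₂ : WMG) (p₁ q₁ s₁ : G₁.V) (p₂ q₂ s₂ : G₂.V) : WMG :=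
  (G₁.disjUnion G₂).quot (fun x y =>
    (x = Sum.inl p₁ ∧ y = Sum.inr p₂) ∨ (x = Sum.inl q₁ ∧ y = Sum.inr q₂) ∨
    (x = Sum.inl s₁ ∧ y = Sum.inr s₂))

/-- Disjoint union of a finite family of graphs. -/
noncomputable def sigmaGraph {k : ℕ} (G : Fin k → WMG) : WMG where
  V := Σ i, (G i).V
  E := Σ i, (G i).E
  instV := inferInstance
  instE := inferInstance
  ends e := (⟨e.1, ((G e.1).ends e.2).1⟩, ⟨e.1, ((G e.1).ends e.2).2⟩)
  len e := (G e.1).len e.2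
  len_pos e := (G e.1).len_pos e.2

/-- Glue the family `G i` along a common pair of vertices (all the `p i` are
identified together, and all the `q i` are identified together): the result is
`G = ⋃ G_i` with `G_i ∩ G_j = {p, q}` for all `i ≠ j`. -/
noncomputable def glueFam {k : ℕ} (G : Fin k → WMG) (p q : ∀ i, (G i).V) : WMG :=
  (sigmaGraph G).quot (fun x y =>
    (∃ i j, x = ⟨i, p i⟩ ∧ y = ⟨j, p j⟩) ∨ (∃ i j, x = ⟨i, q i⟩ ∧ y = ⟨j, q j⟩))

/-- The cyclic successor on `Fin k`. -/
def finSucc {k : ℕ} (i : Fin k) : Fin k :=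
  ⟨(i.1 + 1) % k, Nat.mod_lt _ (Nat.lt_of_le_of_lt (Nat.zero_le _) i.2)⟩

/-- `CG_k`: replace the `i`-th edge of the cycle `C_k` by the graph `G i`,
identifying `t i` (of `G i`) with `s (i+1)` (of `G (i+1)`), cyclically. -/
noncomputable def cycleGlue {k : ℕ} (G : Fin k → WMG) (s t : ∀ i, (G i).V) : WMG :=
  (sigmaGraph G).quot (fun x y =>
    ∃ i, x = ⟨i, t i⟩ ∧ y = ⟨finSucc i, s (finSucc i)⟩)

/-- Join a new vertex `u` (the vertex `none`) to the vertex `p i` of `H` by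
`a i` parallel unit edges, for each `i`.  The resulting graph `G` has `H = G − u`,
and if `p` is injective with all `a i ≥ 1` then `N_G(u) = {p 1, …, p n}` with
`a i` parallel edges joining `u` to `p i`. -/
noncomputable def cone (H : WMG) {n : ℕ} (p : Fin n → H.V) (a : Fin n → ℕ) : WMG where
  V := Option H.V
  E := H.E ⊕ (Σ i : Fin n, Fin (a i))
  instV := inferInstance
  instE := inferInstance
  ends := Sum.elim (fun e => (some (H.ends e).1, some (H.ends e).2))
                   (fun e => (none, some (p e.1)))
  len := Sum.elim H.len (fun _ => 1)
  len_pos := by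
    rintro (e | e)
    · exact H.len_pos e
    · exact one_pos

/-- The path graph `P_n` on `n` vertices `0, 1, …, n-1`, unit edge lengths. -/
noncomputable def path (n : ℕ) : WMG where
  V := Fin n
  E := Fin (n - 1)
  instV := inferInstance
  instE := inferInstance
  ends i := (⟨i.1, by have := i.2; omega⟩, ⟨i.1 + 1, by have := i.2; omega⟩)
  len _ := 1
  len_pos _ := one_pos

/-- The cycle graph `C_n` on `n` vertices, unit edge lengths. -/
noncomputable def cycle (n : ℕ) : WMG where
  V := Fin n
  E := Fin n
  instV := inferInstance
  instE := inferInstance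
  ends i := (i, finSucc i)
  len _ := 1
  len_pos _ := one_pos

/-- The modified fan graph `F̄an_n`: the path `P_n` together with one new hub
vertex joined to each path vertex by `a` parallel edges. -/
noncomputable def fanGraph (n a : ℕ) : WMG :=
  (path n).cone (fun i : Fin n => i) (fun _ => a)

/-- The modified wheel graph `W̄_n`: the cycle `C_n` together with one new hub
vertex joined to each cycle vertex by `a` parallel edges. -/
noncomputable def wheelGraph (n a : ℕ) : WMG :=
  (cycle n).cone (fun i : Fin n => i) (fun _ => a)

end WMG

/-- The Morgan–Voyce polynomial `B_m(x) = ∑_{k=0}^m C(m+k+1, m−k) x^k`. -/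
noncomputable def morganVoyce (m : ℕ) (x : ℝ) : ℝ :=
  ∑ k ∈ Finset.range (m + 1), (Nat.choose (m + k + 1) (m - k) : ℝ) * x ^ k

/-- The polynomial `W_m(x) = ∑_{k=0}^m ((2m+2)/(m+2+k)) C(m+2+k, m−k) x^k`. -/
noncomputable def wheelPoly (m : ℕ) (x : ℝ) : ℝ :=
  ∑ k ∈ Finset.range (m + 1),
    ((2 * m + 2 : ℝ) / (m + 2 + k : ℝ)) * (Nat.choose (m + 2 + k) (m - k) : ℝ) * x ^ k

/-- The Lucas numbers: `L₀ = 2`, `L₁ = 1`, `L_{m+2} = L_m + L_{m+1}`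
(so `L₂ = 3`). -/
def lucas : ℕ → ℕ
  | 0 => 2
  | 1 => 1
  | n + 2 => lucas n + lucas (n + 1)

/-!
Write `w = δ_p - δ_q` for the endpoints `p, q` of `e`. The Laplacian of `G` is the rank-one
update `L_{G-e} + (1/L_e) w wᵀ` of the Laplacian of `G - e`, and since `G - e` is connected, `w`
(whose entries sum to zero) lies in the range of `L_{G-e}`. For such updates the Sherman–Morrison
formula holds for the Moore–Penrose inverse: `L_G⁺ = L_{G-e}⁺ - (L_e + R)⁻¹ u uᵀ`, where
`u = L_{G-e}⁺ w` and `R = wᵀ u = r_{G-e}(p, q) ≥ 0`. Reading off entries,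
`r_G(s,t) = r_{G-e}(s,t) - (u_s - u_t)² / (L_e + R)`; moreover
`j^{G-e}_p(q,s) - j^{G-e}_p(q,t) = u_t - u_s` and `L_G⁺ w = (L_e / (L_e + R)) u`, which give both
formulas. For a connected graph, `L⁺ = (L + J/n)⁻¹ - J/n` with `J` the all-ones matrix.
-/
namespace Matrix

variable {n : Type} [Fintype n]

def IsPenroseInverse (A B : Matrix n n ℝ) : Prop :=
  A * B * A = A ∧ B * A * B = B ∧ (A * B)ᵀ = A * B ∧ (B * A)ᵀ = B * A

namespace IsPenroseInverse

variable {A B C : Matrix n n ℝ}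

theorem unique (hB : IsPenroseInverse A B) (hC : IsPenroseInverse A C) : B = C := by
  obtain ⟨b1, b2, b3, b4⟩ := hB
  obtain ⟨c1, c2, c3, c4⟩ := hC
  have hAB : A * B = A * C := by
    calc A * B = (A * C * A * B)ᵀ := by rw [c1, b3]
    _ = (A * B)ᵀ * (A * C)ᵀ := by rw [← transpose_mul]; simp only [mul_assoc]
    _ = A * C := by rw [b3, c3, ← mul_assoc, b1]
  have hBA : B * A = C * A := by
    calc B * A = (B * A * C * A)ᵀ := by
          rw [mul_assoc (B * A), mul_assoc B, ← mul_assoc A, c1, b4]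
    _ = (C * A)ᵀ * (B * A)ᵀ := by rw [← transpose_mul]; simp only [mul_assoc]
    _ = C * A := by rw [b4, c4, mul_assoc, ← mul_assoc A, b1]
  calc B = B * A * B := b2.symm
  _ = C * A * C := by rw [mul_assoc, hAB, ← mul_assoc, hBA]
  _ = C := c2

theorem mpinv_eq (h : IsPenroseInverse A B) : A.mpinv = B := by
  have hex : ∃ B, IsPenroseInverse A B := ⟨B, h⟩
  exact (dif_pos hex).trans (hex.choose_spec.unique h)

theorem transpose (h : IsPenroseInverse A B) : IsPenroseInverse Aᵀ Bᵀ := by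
  obtain ⟨h1, h2, h3, h4⟩ := h
  refine ⟨?_, ?_, ?_, ?_⟩
  · rw [← transpose_mul, ← transpose_mul, ← mul_assoc, h1]
  · rw [← transpose_mul, ← transpose_mul, ← mul_assoc, h2]
  · rw [← transpose_mul, h4, h4]
  · rw [← transpose_mul, h3, h3]

theorem of_mul_eq {P : Matrix n n ℝ} (hAB : A * B = P) (hBA : B * A = P) (hP : Pᵀ = P)
    (hPA : P * A = A) (hBP : B * P = B) : IsPenroseInverse A B :=
  ⟨by rw [hAB, hPA], by rw [mul_assoc, hAB, hBP], by rw [hAB, hP], by rw [hBA, hP]⟩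

theorem transpose_eq_self (h : IsPenroseInverse A B) (hA : Aᵀ = A) : Bᵀ = B :=
  (hA ▸ h.transpose).unique h

theorem dotProduct_mulVec_nonneg (h : IsPenroseInverse A B) (hA : Aᵀ = A)
    (hA_nonneg : ∀ x, 0 ≤ x ⬝ᵥ A *ᵥ x) (x : n → ℝ) : 0 ≤ x ⬝ᵥ B *ᵥ x := by
  have hBx : x ᵥ* B = B *ᵥ x := by rw [← mulVec_transpose, h.transpose_eq_self hA]
  calc 0 ≤ (B *ᵥ x) ⬝ᵥ A *ᵥ (B *ᵥ x) := hA_nonneg _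
  _ = x ⬝ᵥ B *ᵥ x := by
    conv_rhs => rw [← h.2.1]
    rw [← mulVec_mulVec, ← mulVec_mulVec, dotProduct_mulVec x B, hBx]

theorem add_smul_vecMulVec_self (h : IsPenroseInverse A B) (hA : Aᵀ = A) {w : n → ℝ}
    (hw : A *ᵥ (B *ᵥ w) = w) {c : ℝ} (hc : c ≠ 0) (hcR : c + w ⬝ᵥ B *ᵥ w ≠ 0) :
    IsPenroseInverse (A + c⁻¹ • vecMulVec w w)
      (B - (c + w ⬝ᵥ B *ᵥ w)⁻¹ • vecMulVec (B *ᵥ w) (B *ᵥ w)) := by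
  set u := B *ᵥ w
  set R := w ⬝ᵥ u
  have hB : Bᵀ = B := h.transpose_eq_self hA
  have hwB : w ᵥ* B = u := by rw [← mulVec_transpose, hB]
  have hPu : u ᵥ* (A * B) = u := by
    rw [← mulVec_transpose, transpose_mul, hA, hB, ← mulVec_mulVec, hw]
  have hA' : (A + c⁻¹ • vecMulVec w w)ᵀ = A + c⁻¹ • vecMulVec w w := by
    rw [transpose_add, transpose_smul, transpose_vecMulVec, hA]
  have hB' : (B - (c + R)⁻¹ • vecMulVec u u)ᵀ = B - (c + R)⁻¹ • vecMulVec u u := by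
    rw [transpose_sub, transpose_smul, transpose_vecMulVec, hB]
  have hAB' : (A + c⁻¹ • vecMulVec w w) * (B - (c + R)⁻¹ • vecMulVec u u) = A * B := by
    have hcoef : c⁻¹ - (c + R)⁻¹ - c⁻¹ * (c + R)⁻¹ * R = 0 := by field_simp; ring
    rw [add_mul, mul_sub, mul_sub, Matrix.mul_smul, Matrix.mul_smul, smul_mul, smul_mul,
      mul_vecMulVec, hw, vecMulVec_mul, hwB, vecMulVec_mul_vecMulVec, vecMulVec_smul]
    linear_combination (norm := module) hcoef • vecMulVec w u
  refine of_mul_eq hAB' ?_ h.2.2.1 ?_ ?_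
  · rw [← hA', ← hB', ← transpose_mul, hAB', h.2.2.1]
  · rw [mul_add, h.1, Matrix.mul_smul, mul_vecMulVec, ← mulVec_mulVec, hw]
  · rw [sub_mul, ← mul_assoc, h.2.1, smul_mul, vecMulVec_mul, hPu]

end IsPenroseInverse

theorem mpinv_transpose (A : Matrix n n ℝ) : Aᵀ.mpinv = A.mpinvᵀ := by
  by_cases h : ∃ B, IsPenroseInverse A B
  · obtain ⟨B, hB⟩ := h
    rw [hB.transpose.mpinv_eq, hB.mpinv_eq]
  · have h' : ¬ ∃ B, IsPenroseInverse Aᵀ B := fun ⟨B, hB⟩ =>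
      h ⟨Bᵀ, by simpa using hB.transpose⟩
    rw [show Aᵀ.mpinv = 0 from dif_neg h', show A.mpinv = 0 from dif_neg h, transpose_zero]

theorem exists_isPenroseInverse_of_ker_eq_span_one [Nonempty n] {A : Matrix n n ℝ}
    (hA : Aᵀ = A) (hA1 : A *ᵥ 1 = 0) (hker : ∀ x, A *ᵥ x = 0 → 1 ⬝ᵥ x = 0 → x = 0) :
    ∃ B, IsPenroseInverse A B ∧ A * B = 1 - (Fintype.card n : ℝ)⁻¹ • vecMulVec 1 1 := by
  set ν : ℝ := (Fintype.card n : ℝ)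
  have hν : ν ≠ 0 := Nat.cast_ne_zero.mpr Fintype.card_ne_zero
  set J : Matrix n n ℝ := vecMulVec 1 1
  have hJJ : J * J = ν • J := by
    rw [vecMulVec_mul_vecMulVec, one_dotProduct_one, vecMulVec_smul]
  have hAJ : A * J = 0 := by rw [mul_vecMulVec, hA1, zero_vecMulVec]
  have hJA : J * A = 0 := by
    rw [← transpose_transpose (J * A), transpose_mul, hA, transpose_vecMulVec, hAJ,
      transpose_zero]
  -- `K` is invertible: it agrees with `A` on `1ᗮ` and fixes `1`.
  set K := A + ν⁻¹ • J
  have hJK : J * K = J := by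
    rw [mul_add, hJA, Matrix.mul_smul, hJJ, smul_smul, inv_mul_cancel₀ hν, one_smul, zero_add]
  have hKJ : K * J = J := by
    rw [add_mul, hAJ, smul_mul, hJJ, smul_smul, inv_mul_cancel₀ hν, one_smul, zero_add]
  have hK : IsUnit K.det := by
    rw [isUnit_iff_ne_zero, Ne, ← exists_mulVec_eq_zero_iff]
    rintro ⟨x, hx0, hKx⟩
    have hJx : J *ᵥ x = 0 := by rw [← hJK, ← mulVec_mulVec, hKx, mulVec_zero]
    have hsum : 1 ⬝ᵥ x = 0 := by
      have := congrFun hJx (Classical.arbitrary n)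
      rw [vecMulVec_mulVec] at this
      simpa using this
    refine hx0 (hker x ?_ hsum)
    rwa [add_mulVec, smul_mulVec, hJx, smul_zero, add_zero] at hKx
  have hKiJ : K⁻¹ * J = J := by
    rw [← hKJ, ← mul_assoc, nonsing_inv_mul _ hK, one_mul, hKJ]
  have hJKi : J * K⁻¹ = J := by
    rw [← hJK, mul_assoc, mul_nonsing_inv _ hK, mul_one, hJK]
  have hAK : A = K - ν⁻¹ • J := (add_sub_cancel_right _ _).symm
  have hNJ : (K⁻¹ - ν⁻¹ • J) * J = 0 := by
    rw [sub_mul, hKiJ, smul_mul, hJJ, smul_smul, inv_mul_cancel₀ hν, one_smul, sub_self]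
  have hAN : A * (K⁻¹ - ν⁻¹ • J) = 1 - ν⁻¹ • J := by
    rw [mul_sub, Matrix.mul_smul, hAJ, smul_zero, sub_zero, hAK, sub_mul,
      mul_nonsing_inv _ hK, smul_mul, hJKi]
  have hNA : (K⁻¹ - ν⁻¹ • J) * A = 1 - ν⁻¹ • J := by
    rw [sub_mul, smul_mul, hJA, smul_zero, sub_zero, hAK, mul_sub, nonsing_inv_mul _ hK,
      Matrix.mul_smul, hKiJ]
  refine ⟨K⁻¹ - ν⁻¹ • J, IsPenroseInverse.of_mul_eq hAN hNA ?_ ?_ ?_, hAN⟩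
  · rw [transpose_sub, transpose_one, transpose_smul, transpose_vecMulVec]
  · rw [sub_mul, one_mul, smul_mul, hJA, smul_zero, sub_zero]
  · rw [mul_sub, mul_one, Matrix.mul_smul, hNJ, smul_zero, sub_zero]

end Matrix

namespace WMG

open Matrix

noncomputable def dipole {V : Type} (p q : V) : V → ℝ := fun u => ind u p - ind u q

section dipole

variable {V : Type} [Fintype V]

theorem dipole_dotProduct (p q : V) (x : V → ℝ) : dipole p q ⬝ᵥ x = x p - x q := by
  simp [dipole, dotProduct, sub_mul, ind, Finset.sum_sub_distrib]

theorem dotProduct_dipole (p q : V) (x : V → ℝ) : x ⬝ᵥ dipole p q = x p - x q := by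
  rw [dotProduct_comm, dipole_dotProduct]

end dipole

variable (H : WMG)

theorem lap_eq_sum : H.lap = ∑ e, (H.len e)⁻¹ •
    vecMulVec (dipole (H.ends e).1 (H.ends e).2) (dipole (H.ends e).1 (H.ends e).2) :=
  rfl

theorem lap_transpose : H.lapᵀ = H.lap := by
  simp only [lap_eq_sum, transpose_sum, transpose_smul, transpose_vecMulVec]

theorem lap_mulVec (x : H.V → ℝ) : H.lap *ᵥ x = ∑ e, ((H.len e)⁻¹ *
    (x (H.ends e).1 - x (H.ends e).2)) • dipole (H.ends e).1 (H.ends e).2 := by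
  simp only [lap_eq_sum, sum_mulVec, smul_mulVec, vecMulVec_mulVec, dipole_dotProduct,
    op_smul_eq_smul, smul_smul]

theorem lap_mulVec_one : H.lap *ᵥ 1 = 0 := by
  simp [lap_mulVec]

theorem dotProduct_lap_mulVec (x : H.V → ℝ) :
    x ⬝ᵥ H.lap *ᵥ x = ∑ e, (H.len e)⁻¹ * (x (H.ends e).1 - x (H.ends e).2) ^ 2 := by
  simp only [lap_mulVec, dotProduct_sum, dotProduct_smul, dotProduct_dipole, smul_eq_mul, sq,
    mul_assoc]

theorem dotProduct_lap_mulVec_nonneg (x : H.V → ℝ) : 0 ≤ x ⬝ᵥ H.lap *ᵥ x := by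
  rw [dotProduct_lap_mulVec]
  exact Finset.sum_nonneg fun e _ => mul_nonneg (inv_nonneg.mpr (H.len_pos e).le) (sq_nonneg _)

theorem mpinv_lap_transpose : H.lap.mpinvᵀ = H.lap.mpinv := by
  rw [← mpinv_transpose, lap_transpose]

noncomputable def potential (p q : H.V) : H.V → ℝ := H.lap.mpinv *ᵥ dipole p q

theorem potential_apply (p q u : H.V) :
    H.potential p q u = H.lap.mpinv u p - H.lap.mpinv u q := by
  rw [potential, mulVec, dotProduct_dipole]

theorem res_eq_dipole_dotProduct_potential (p q : H.V) :
    H.res p q = dipole p q ⬝ᵥ H.potential p q := by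
  have hsymm := congrFun₂ H.mpinv_lap_transpose
  rw [dipole_dotProduct, potential_apply, potential_apply, res, ← hsymm q p]
  simp only [transpose_apply]
  ring

theorem volt_sub_volt (p q s t : H.V) :
    H.volt p q s - H.volt p q t = H.potential p q t - H.potential p q s := by
  have hsymm := congrFun₂ H.mpinv_lap_transpose
  rw [volt, volt, potential_apply, potential_apply, ← hsymm s p, ← hsymm s q, ← hsymm t p,
    ← hsymm t q]
  simp only [transpose_apply]
  ring

theorem lap_delete (e : H.E) : (H.delete e).lap = H.lap - (H.len e)⁻¹ •
    vecMulVec (dipole (H.ends e).1 (H.ends e).2) (dipole (H.ends e).1 (H.ends e).2) := by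
  rw [lap_eq_sum, lap_eq_sum, ← Finset.add_sum_erase _ _ (Finset.mem_univ e), add_sub_cancel_left]
  exact (Finset.sum_subtype (p := (· ≠ e)) (F := (H.delete e).instE) (Finset.univ.erase e)
    (by simp) (fun f => (H.len f)⁻¹ •
      vecMulVec (dipole (H.ends f).1 (H.ends f).2) (dipole (H.ends f).1 (H.ends f).2))).symm

namespace Connected

variable {H}

theorem eq_of_lap_mulVec_eq_zero (hH : H.Connected) {x : H.V → ℝ} (hx : H.lap *ᵥ x = 0)
    (u v : H.V) : x u = x v := by
  have hedge : ∀ e, x (H.ends e).1 = x (H.ends e).2 := by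
    intro e
    have hterm := (Finset.sum_eq_zero_iff_of_nonneg fun f _ =>
        mul_nonneg (inv_nonneg.mpr (H.len_pos f).le) (sq_nonneg _)).mp
      (by rw [← dotProduct_lap_mulVec, hx, dotProduct_zero]) e (Finset.mem_univ e)
    rw [mul_eq_zero, inv_eq_zero, sq_eq_zero_iff, sub_eq_zero] at hterm
    exact hterm.resolve_left (H.len_pos e).ne'
  induction hH.2 u v with
  | refl => rfl
  | tail _ hadj ih =>
    obtain ⟨e, he | he⟩ := hadj
    · exact ih.trans (by simpa [he] using hedge e)
    · exact ih.trans (by simpa [he] using (hedge e).symm)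

theorem eq_zero_of_lap_mulVec_eq_zero (hH : H.Connected) {x : H.V → ℝ}
    (hx : H.lap *ᵥ x = 0) (hsum : 1 ⬝ᵥ x = 0) : x = 0 := by
  have hcard : (Fintype.card H.V : ℝ) ≠ 0 := by
    have := hH.1
    exact Nat.cast_ne_zero.mpr Fintype.card_ne_zero
  funext u
  have hconst : x = fun _ => x u := funext fun v => hH.eq_of_lap_mulVec_eq_zero hx v u
  rw [hconst, one_dotProduct, Finset.sum_const, Finset.card_univ, nsmul_eq_mul] at hsum
  exact (mul_eq_zero.mp hsum).resolve_left hcard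

theorem exists_isPenroseInverse_lap (hH : H.Connected) : ∃ B, IsPenroseInverse H.lap B ∧
    H.lap * B = 1 - (Fintype.card H.V : ℝ)⁻¹ • vecMulVec 1 1 :=
  have := hH.1
  exists_isPenroseInverse_of_ker_eq_span_one H.lap_transpose H.lap_mulVec_one
    fun _ hx hsum => hH.eq_zero_of_lap_mulVec_eq_zero hx hsum

theorem isPenroseInverse_mpinv (hH : H.Connected) : IsPenroseInverse H.lap H.lap.mpinv := by
  obtain ⟨B, hB, -⟩ := hH.exists_isPenroseInverse_lap
  rwa [hB.mpinv_eq]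

theorem lap_mulVec_potential (hH : H.Connected) (p q : H.V) :
    H.lap *ᵥ H.potential p q = dipole p q := by
  obtain ⟨B, hB, hAB⟩ := hH.exists_isPenroseInverse_lap
  rw [potential, hB.mpinv_eq, mulVec_mulVec, hAB, sub_mulVec, one_mulVec, smul_mulVec,
    vecMulVec_mulVec, dotProduct_dipole]
  simp

theorem res_nonneg (hH : H.Connected) (p q : H.V) : 0 ≤ H.res p q := by
  rw [res_eq_dipole_dotProduct_potential]
  exact hH.isPenroseInverse_mpinv.dotProduct_mulVec_nonneg H.lap_transpose
    H.dotProduct_lap_mulVec_nonneg _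

variable {c : ℝ} {X : Matrix H.V H.V ℝ}

/- The updated Laplacian enters as any `X` equal to it, so that these lemmas apply to `G.lap`,
whose vertex type `G.V` is only definitionally that of `G.delete e`. -/
theorem mpinv_eq_of_eq_lap_add (hH : H.Connected) (hc : 0 < c) (p q : H.V)
    (hX : X = H.lap + c⁻¹ • vecMulVec (dipole p q) (dipole p q)) : X.mpinv =
    H.lap.mpinv - (c + H.res p q)⁻¹ • vecMulVec (H.potential p q) (H.potential p q) := by
  have hcR := add_pos_of_pos_of_nonneg hc (hH.res_nonneg p q)
  rw [res_eq_dipole_dotProduct_potential] at hcR ⊢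
  rw [hX]
  exact (hH.isPenroseInverse_mpinv.add_smul_vecMulVec_self H.lap_transpose
    (hH.lap_mulVec_potential p q) hc.ne' hcR.ne').mpinv_eq

theorem mpinv_sub_mpinv_of_eq_lap_add (hH : H.Connected) (hc : 0 < c) (p q : H.V)
    (hX : X = H.lap + c⁻¹ • vecMulVec (dipole p q) (dipole p q)) (s : H.V) :
    X.mpinv s p - X.mpinv s q = c / (c + H.res p q) * H.potential p q s := by
  have hcR := add_pos_of_pos_of_nonneg hc (hH.res_nonneg p q)
  have hR := H.res_eq_dipole_dotProduct_potential p q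
  rw [dipole_dotProduct] at hR
  rw [hH.mpinv_eq_of_eq_lap_add hc p q hX]
  simp only [Matrix.sub_apply, Matrix.smul_apply, vecMulVec_apply, smul_eq_mul]
  field_simp
  linear_combination (-(c + H.res p q)) * H.potential_apply p q s + H.potential p q s * hR

theorem res_of_eq_lap_add (hH : H.Connected) (hc : 0 < c) (p q : H.V)
    (hX : X = H.lap + c⁻¹ • vecMulVec (dipole p q) (dipole p q)) (s t : H.V) :
    X.mpinv s s - 2 * X.mpinv s t + X.mpinv t t = H.res s t -
      (c + H.res p q)⁻¹ * (H.potential p q s - H.potential p q t) ^ 2 := by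
  rw [hH.mpinv_eq_of_eq_lap_add hc p q hX]
  simp only [res, Matrix.sub_apply, Matrix.smul_apply, vecMulVec_apply, smul_eq_mul]
  ring

end Connected

section cutting

variable {G : WMG} {e : G.E}

theorem res_of_not_isBridge (he : ¬ G.IsBridge e) (s t : G.V) :
    G.res s t = (G.delete e).res s t -
      (G.len e + (G.delete e).res (G.ends e).1 (G.ends e).2)⁻¹ *
        ((G.delete e).potential (G.ends e).1 (G.ends e).2 s -
          (G.delete e).potential (G.ends e).1 (G.ends e).2 t) ^ 2 :=
  Connected.res_of_eq_lap_add (not_not.mp he) (G.len_pos e) _ _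
    (sub_eq_iff_eq_add.mp (G.lap_delete e).symm) s t

theorem potential_apply_of_not_isBridge (he : ¬ G.IsBridge e) (x : G.V) :
    G.potential (G.ends e).1 (G.ends e).2 x =
      G.len e / (G.len e + (G.delete e).res (G.ends e).1 (G.ends e).2) *
        (G.delete e).potential (G.ends e).1 (G.ends e).2 x := by
  rw [potential_apply]
  exact Connected.mpinv_sub_mpinv_of_eq_lap_add (not_not.mp he) (G.len_pos e) _ _
    (sub_eq_iff_eq_add.mp (G.lap_delete e).symm) x

end cutting

end WMG

theorem explicit_rayleigh_cutting_law_general (G : WMG) (e : G.E) (he : ¬ G.IsBridge e) (s t : G.V) :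
    (G.res s t = (G.delete e).res s t -
        (1 / (G.len e + (G.delete e).res (G.ends e).1 (G.ends e).2)) *
          ((G.delete e).volt (G.ends e).1 (G.ends e).2 s -
           (G.delete e).volt (G.ends e).1 (G.ends e).2 t) ^ 2) ∧
    (G.res s t = (G.delete e).res s t -
        ((G.len e + (G.delete e).res (G.ends e).1 (G.ends e).2) / (G.len e) ^ 2) *
          (G.volt (G.ends e).1 (G.ends e).2 s -
           G.volt (G.ends e).1 (G.ends e).2 t) ^ 2) ∧
    G.res s t ≤ (G.delete e).res s t ∧
    ((G.delete e).res s t = G.res s t ↔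
      G.volt (G.ends e).1 (G.ends e).2 s = G.volt (G.ends e).1 (G.ends e).2 t) := by
  have hL := G.len_pos e
  have hLR := add_pos_of_pos_of_nonneg hL
    ((not_not.mp he : (G.delete e).Connected).res_nonneg (G.ends e).1 (G.ends e).2)
  have hres := WMG.res_of_not_isBridge he s t
  have hvolt := G.volt_sub_volt (G.ends e).1 (G.ends e).2 s t
  rw [WMG.potential_apply_of_not_isBridge he, WMG.potential_apply_of_not_isBridge he,
    ← mul_sub] at hvolt
  have hvolt_delete := (G.delete e).volt_sub_volt (G.ends e).1 (G.ends e).2 s t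
  set L := G.len e
  set R := (G.delete e).res (G.ends e).1 (G.ends e).2
  set u := (G.delete e).potential (G.ends e).1 (G.ends e).2
  have hdrop_eq_zero : (L + R)⁻¹ * (u s - u t) ^ 2 = 0 ↔ L / (L + R) * (u t - u s) = 0 := by
    simp [hL.ne', hLR.ne', sub_eq_zero, eq_comm (a := u s)]
  refine ⟨by rw [hres, hvolt_delete]; ring, by rw [hres, hvolt]; field_simp; ring, ?_, ?_⟩
  · rw [hres]
    exact sub_le_self _ (by positivity)
  · rw [← sub_eq_zero (a := G.volt _ _ s), hvolt, ← hdrop_eq_zero]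
    constructor <;> intro h <;> linarith

/-- **Explicit Rayleigh's Cutting Law.**  If the edge `e` (with endpoints
`p_i, q_i` and length `L_i`) is not a bridge of the finite connected weighted
graph `G`, then for all vertices `s, t`:
`r(s,t) = r_{G-e}(s,t) - (1/(L_i+R_i)) (j^{G-e}_{p_i}(q_i,s) - j^{G-e}_{p_i}(q_i,t))²
        = r_{G-e}(s,t) - ((L_i+R_i)/L_i²) (j_{p_i}(q_i,s) - j_{p_i}(q_i,t))²`;
in particular `r_{G-e}(s,t) ≥ r(s,t)` with equality iff
`j_{p_i}(q_i,s) = j_{p_i}(q_i,t)`. -/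
theorem explicit_rayleigh_cutting_law (G : WMG) (hG : G.Connected)
    (e : G.E) (he : ¬ G.IsBridge e) (s t : G.V) :
    (G.res s t = (G.delete e).res s t -
        (1 / (G.len e + (G.delete e).res (G.ends e).1 (G.ends e).2)) *
          ((G.delete e).volt (G.ends e).1 (G.ends e).2 s -
           (G.delete e).volt (G.ends e).1 (G.ends e).2 t) ^ 2) ∧
    (G.res s t = (G.delete e).res s t -
        ((G.len e + (G.delete e).res (G.ends e).1 (G.ends e).2) / (G.len e) ^ 2) *
          (G.volt (G.ends e).1 (G.ends e).2 s -
           G.volt (G.ends e).1 (G.ends e).2 t) ^ 2) ∧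
    G.res s t ≤ (G.delete e).res s t ∧
    ((G.delete e).res s t = G.res s t ↔
      G.volt (G.ends e).1 (G.ends e).2 s = G.volt (G.ends e).1 (G.ends e).2 t) :=
  explicit_rayleigh_cutting_law_general G e he s t
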